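/- Let K be a field of characteristic 0, and let Q, P ∈ K[t] be polynomials with deg Q ≤ 2 and deg P ≤ 4. In K[t,x] set F := x² − Q(t)·x − P(t), and let D_F(g) := (∂F/∂x)·(∂g/∂t) − (∂F/∂t)·(∂g/∂x), so that D_F(t) = 2x − Q(t) and D_F(x) = Q'(t)·x + P'(t). For each natural number k, let M_k ⊆ K[t,x] be the K-linear span of the monomials {t^i : 0 ≤ i ≤ k} ∪ {t^j·x : 0 ≤ j ≤ k−2}. Then for every k and every g ∈ M_k, D_F(g) lies in M_{k+1} + (F), where (F) is the ideal generated by F. -/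

import Mathlib

/-!
`D_F` is a derivation, so it suffices to check the claim on the spanning monomials `t^i` and
`t^j x`, using `D_F t = 2x - Q(t)` and `D_F x = Q'(t) x + P'(t)`. Giving `t` weight 1 and `x`
weight 2, `M_k` consists of the polynomials of weight `≤ k` that are at most linear in `x`, and
both formulas raise the weight by at most 1. The only term leaving `M_{k+1}` is the `x²` in
`D_F (t^j x)`, which is congruent to `Q(t) x + P(t)` modulo `F`.
-/

open MvPolynomial

namespace OdesskiiWolf

lemma natCast_mul_mem {A S : Type*} [Semiring A] [SetLike S A] [AddSubmonoidClass S A]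
    {N : S} {a : A} (n : ℕ) (ha : a ∈ N) : (n : A) * a ∈ N := by
  rw [← nsmul_eq_mul]
  exact nsmul_mem ha n

section

variable {K : Type*} [Field K]

local notation "t" => (X 0 : MvPolynomial (Fin 2) K)
local notation "x" => (X 1 : MvPolynomial (Fin 2) K)
local notation "ev" => Polynomial.aeval (X 0 : MvPolynomial (Fin 2) K)

variable (K) in
noncomputable def filtration (k : ℕ) : Submodule K (MvPolynomial (Fin 2) K) :=
  Submodule.span K ({a | ∃ i ≤ k, a = t ^ i} ∪ {a | ∃ j, j + 2 ≤ k ∧ a = t ^ j * x})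

lemma X_zero_pow_mem_filtration {i k : ℕ} (h : i ≤ k) : t ^ i ∈ filtration K k :=
  Submodule.subset_span (Or.inl ⟨i, h, rfl⟩)

lemma X_zero_pow_mul_X_one_mem_filtration {j k : ℕ} (h : j + 2 ≤ k) :
    t ^ j * x ∈ filtration K k :=
  Submodule.subset_span (Or.inr ⟨j, h, rfl⟩)

lemma aeval_X_zero_mul_X_zero_pow_mem_filtration {R : Polynomial K} {d m k : ℕ}
    (hR : R.natDegree ≤ d) (h : d + m ≤ k) : ev R * t ^ m ∈ filtration K k := by
  rw [Polynomial.aeval_eq_sum_range, Finset.sum_mul]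
  refine Submodule.sum_mem _ fun i hi => ?_
  rw [smul_mul_assoc, ← pow_add]
  exact Submodule.smul_mem _ _ (X_zero_pow_mem_filtration (by grind))

lemma aeval_X_zero_mul_X_zero_pow_mul_X_one_mem_filtration {R : Polynomial K} {d m k : ℕ}
    (hR : R.natDegree ≤ d) (h : d + m + 2 ≤ k) : ev R * (t ^ m * x) ∈ filtration K k := by
  rw [Polynomial.aeval_eq_sum_range, Finset.sum_mul]
  refine Submodule.sum_mem _ fun i hi => ?_
  rw [smul_mul_assoc, ← mul_assoc, ← pow_add]
  exact Submodule.smul_mem _ _ (X_zero_pow_mul_X_one_mem_filtration (by grind))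

lemma natDegree_derivative_le_of_le {R : Polynomial K} {d : ℕ} (hR : R.natDegree ≤ d + 1) :
    R.derivative.natDegree ≤ d :=
  (Polynomial.natDegree_derivative_le R).trans (by omega)

noncomputable def curve (Q P : Polynomial K) : MvPolynomial (Fin 2) K :=
  x ^ 2 - ev Q * x - ev P

noncomputable def derivation (F : MvPolynomial (Fin 2) K) :
    Derivation K (MvPolynomial (Fin 2) K) (MvPolynomial (Fin 2) K) :=
  pderiv 1 F • pderiv 0 - pderiv 0 F • pderiv 1

lemma derivation_apply (F g : MvPolynomial (Fin 2) K) :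
    derivation F g = pderiv 1 F * pderiv 0 g - pderiv 0 F * pderiv 1 g :=
  rfl

variable {Q P : Polynomial K}

lemma derivation_curve_X_zero : derivation (curve Q P) t = 2 * x - ev Q := by
  simp [derivation_apply, curve]

lemma derivation_curve_X_one :
    derivation (curve Q P) x = ev (Polynomial.derivative Q) * x + ev (Polynomial.derivative P) := by
  simp [derivation_apply, curve, add_comm, mul_comm]

lemma derivation_curve_X_zero_pow_mem_filtration (hQ : Q.natDegree ≤ 2) {i k : ℕ}
    (hi : i ≤ k) : derivation (curve Q P) (t ^ i) ∈ filtration K (k + 1) := by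
  cases i with
  | zero => simp
  | succ m =>
    have hD : derivation (curve Q P) (t ^ (m + 1))
        = ((2 * (m + 1) : ℕ) : MvPolynomial (Fin 2) K) * (t ^ m * x)
          - ((m + 1 : ℕ) : MvPolynomial (Fin 2) K) * (ev Q * t ^ m) := by
      rw [Derivation.leibniz_pow, derivation_curve_X_zero, smul_eq_mul, nsmul_eq_mul,
        Nat.add_sub_cancel]
      push_cast
      ring
    rw [hD]
    exact sub_mem (natCast_mul_mem _ (X_zero_pow_mul_X_one_mem_filtration (by omega)))
      (natCast_mul_mem _ (aeval_X_zero_mul_X_zero_pow_mem_filtration hQ (by omega)))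

lemma derivation_curve_X_one_mem_filtration (hQ : Q.natDegree ≤ 2) (hP : P.natDegree ≤ 4)
    {k : ℕ} (hk : 2 ≤ k) : derivation (curve Q P) x ∈ filtration K (k + 1) := by
  have hQ' := aeval_X_zero_mul_X_zero_pow_mul_X_one_mem_filtration (m := 0) (k := k + 1)
    (natDegree_derivative_le_of_le hQ) (by omega)
  have hP' := aeval_X_zero_mul_X_zero_pow_mem_filtration (m := 0) (k := k + 1)
    (natDegree_derivative_le_of_le hP) (by omega)
  rw [pow_zero, one_mul] at hQ'
  rw [pow_zero, mul_one] at hP'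
  rw [derivation_curve_X_one]
  exact add_mem hQ' hP'

lemma derivation_curve_X_zero_pow_succ_mul_X_one_mem (hQ : Q.natDegree ≤ 2)
    (hP : P.natDegree ≤ 4) {m k : ℕ} (hm : m + 3 ≤ k) :
    derivation (curve Q P) (t ^ (m + 1) * x) ∈
      filtration K (k + 1) ⊔ (Ideal.span {curve Q P}).restrictScalars K := by
  have hD : derivation (curve Q P) (t ^ (m + 1) * x)
      = ((2 * (m + 1) : ℕ) : MvPolynomial (Fin 2) K) * (t ^ m * curve Q P)
        + (((m + 1 : ℕ) : MvPolynomial (Fin 2) K) * (ev Q * (t ^ m * x))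
          + ((2 * (m + 1) : ℕ) : MvPolynomial (Fin 2) K) * (ev P * t ^ m)
          + ev (Polynomial.derivative Q) * (t ^ (m + 1) * x)
          + ev (Polynomial.derivative P) * t ^ (m + 1)) := by
    rw [Derivation.leibniz, Derivation.leibniz_pow, derivation_curve_X_zero,
      derivation_curve_X_one, curve, smul_eq_mul, smul_eq_mul, nsmul_eq_mul, Nat.add_sub_cancel]
    push_cast
    ring
  rw [hD]
  refine add_mem (Submodule.mem_sup_right (Ideal.mul_mem_left _ _
    (Ideal.mul_mem_left _ _ (Ideal.subset_span rfl)))) (Submodule.mem_sup_left ?_)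
  refine add_mem (add_mem (add_mem ?_ ?_) ?_) ?_
  · exact natCast_mul_mem _ (aeval_X_zero_mul_X_zero_pow_mul_X_one_mem_filtration hQ (by omega))
  · exact natCast_mul_mem _ (aeval_X_zero_mul_X_zero_pow_mem_filtration hP (by omega))
  · exact aeval_X_zero_mul_X_zero_pow_mul_X_one_mem_filtration
      (natDegree_derivative_le_of_le hQ) (by omega)
  · exact aeval_X_zero_mul_X_zero_pow_mem_filtration (natDegree_derivative_le_of_le hP)
      (by omega)

theorem map_derivation_curve_filtration_le (hQ : Q.natDegree ≤ 2) (hP : P.natDegree ≤ 4)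
    (k : ℕ) : (filtration K k).map (derivation (curve Q P)).toLinearMap ≤
      filtration K (k + 1) ⊔ (Ideal.span {curve Q P}).restrictScalars K := by
  rw [filtration, Submodule.map_span_le]
  rintro _ (⟨i, hi, rfl⟩ | ⟨j, hj, rfl⟩)
  · exact Submodule.mem_sup_left (derivation_curve_X_zero_pow_mem_filtration hQ hi)
  · cases j with
    | zero =>
      rw [pow_zero, one_mul]
      exact Submodule.mem_sup_left (derivation_curve_X_one_mem_filtration hQ hP (by omega))
    | succ m => exact derivation_curve_X_zero_pow_succ_mul_X_one_mem hQ hP (by omega)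

end

end OdesskiiWolf

theorem OW_derivation_even_filtration_general (K : Type*) [Field K]
    (Q P : Polynomial K) (hQ : Q.degree ≤ 2) (hP : P.degree ≤ 4)
    (F : MvPolynomial (Fin 2) K)
    (hF : F = X 1 ^ 2 - Polynomial.aeval (X 0 : MvPolynomial (Fin 2) K) Q * X 1
          - Polynomial.aeval (X 0 : MvPolynomial (Fin 2) K) P)
    (k : ℕ) (g : MvPolynomial (Fin 2) K)
    (hg : g ∈ Submodule.span K
      ({a | ∃ i ≤ k, a = (X 0 : MvPolynomial (Fin 2) K) ^ i} ∪
       {a | ∃ j, j + 2 ≤ k ∧ a = (X 0 : MvPolynomial (Fin 2) K) ^ j * X 1})) :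
    pderiv 1 F * pderiv 0 g - pderiv 0 F * pderiv 1 g ∈
      Submodule.span K
        ({a | ∃ i ≤ k + 1, a = (X 0 : MvPolynomial (Fin 2) K) ^ i} ∪
         {a | ∃ j, j + 2 ≤ k + 1 ∧ a = (X 0 : MvPolynomial (Fin 2) K) ^ j * X 1}) ⊔
      Submodule.restrictScalars K (Ideal.span {F}) := by
  have hQ2 : Q.natDegree ≤ 2 := Polynomial.natDegree_le_of_degree_le hQ
  have hP4 : P.natDegree ≤ 4 := Polynomial.natDegree_le_of_degree_le hP
  subst hF
  exact OdesskiiWolf.map_derivation_curve_filtration_le hQ2 hP4 k (Submodule.mem_map_of_mem hg)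

/-- Even case: for `F = x² - Q(t)x - P(t)` with `deg Q ≤ 2`, `deg P ≤ 4`, the derivation
`D_F(g) = (∂F/∂x)(∂g/∂t) - (∂F/∂t)(∂g/∂x)` maps the span `M_k` of
`{t^i : i ≤ k} ∪ {t^j x : j ≤ k-2}` into `M_{k+1} + (F)`. -/
theorem OW_derivation_even_filtration (K : Type*) [Field K] [CharZero K]
    (Q P : Polynomial K) (hQ : Q.degree ≤ 2) (hP : P.degree ≤ 4)
    (F : MvPolynomial (Fin 2) K)
    (hF : F = X 1 ^ 2 - Polynomial.aeval (X 0 : MvPolynomial (Fin 2) K) Q * X 1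
          - Polynomial.aeval (X 0 : MvPolynomial (Fin 2) K) P)
    (k : ℕ) (g : MvPolynomial (Fin 2) K)
    (hg : g ∈ Submodule.span K
      ({a | ∃ i ≤ k, a = (X 0 : MvPolynomial (Fin 2) K) ^ i} ∪
       {a | ∃ j, j + 2 ≤ k ∧ a = (X 0 : MvPolynomial (Fin 2) K) ^ j * X 1})) :
    pderiv 1 F * pderiv 0 g - pderiv 0 F * pderiv 1 g ∈
      Submodule.span K
        ({a | ∃ i ≤ k + 1, a = (X 0 : MvPolynomial (Fin 2) K) ^ i} ∪
         {a | ∃ j, j + 2 ≤ k + 1 ∧ a = (X 0 : MvPolynomial (Fin 2) K) ^ j * X 1}) ⊔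
      Submodule.restrictScalars K (Ideal.span {F}) :=
  OW_derivation_even_filtration_general K Q P hQ hP F hF k g hg
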